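/- Let Σ₁ and Σ₂ be compatible connected signed graphs on m and n vertices with compatible Cartesian product. Then the signed distance matrix satisfies D(Σ₁ × Σ₂) = D(Σ₁) ⊗ (K^{D±}(Σ₂) + I_n) + (K^{D±}(Σ₁) + I_m) ⊗ D(Σ₂), where ⊗ is the Kronecker product. -/

import Mathlib

open SimpleGraph

/-- The sign of a walk: the product of the signs of its edges. -/
def walkSign {V : Type*} {G : SimpleGraph V} (σ : V → V → ℤ) :
    {u v : V} → G.Walk u v → ℤ
  | _, _, SimpleGraph.Walk.nil => 1
  | _, _, @SimpleGraph.Walk.cons _ _ a b _ _ p => σ a b * walkSign σ p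

/-- A walk is a shortest path if its length equals the distance of its endpoints. -/
def IsShortest {V : Type*} {G : SimpleGraph V} {u v : V} (p : G.Walk u v) : Prop :=
  p.length = G.dist u v

/-- A signed graph is compatible if all shortest paths between any two vertices have
the same sign. -/
def Compatible {V : Type*} (G : SimpleGraph V) (σ : V → V → ℤ) : Prop :=
  ∀ (u v : V) (p q : G.Walk u v), IsShortest p → IsShortest q →
    walkSign σ p = walkSign σ q

/-- The signature of the Cartesian product of signed graphs: an edge inherits the sign
from the coordinate in which the move occurs. -/
def boxSign {V₁ V₂ : Type*} (σ₁ : V₁ → V₁ → ℤ) (σ₂ : V₂ → V₂ → ℤ)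
    [DecidableEq V₁] [DecidableEq V₂] : V₁ × V₂ → V₁ × V₂ → ℤ :=
  fun x y => if x.2 = y.2 then σ₁ x.1 y.1 else σ₂ x.2 y.2

open Kronecker Matrix

/-!
A shortest walk in `G₁ □ G₂` from `(u₁, u₂)` to `(v₁, v₂)` is obtained by first following a
shortest `u₁ – v₁` walk in the first coordinate and then a shortest `u₂ – v₂` walk in the second,
because product distances add up. Its sign is the product of the two signs, so the signed
distance of the product is `s₁ s₂ (d₁ + d₂) = (s₁ d₁) s₂ + s₁ (s₂ d₂)`, which is the claimed
Kronecker identity read entrywise.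
-/

namespace SimpleGraph

variable {V₁ V₂ : Type*} {G₁ : SimpleGraph V₁} {G₂ : SimpleGraph V₂}

lemma dist_boxProd_of_reachable {x y : V₁ × V₂} (h₁ : G₁.Reachable x.1 y.1)
    (h₂ : G₂.Reachable x.2 y.2) :
    (G₁ □ G₂).dist x y = G₁.dist x.1 y.1 + G₂.dist x.2 y.2 := by
  have h := (reachable_boxProd.2 ⟨h₁, h₂⟩).coe_dist_eq_edist
  rw [edist_boxProd, ← h₁.coe_dist_eq_edist, ← h₂.coe_dist_eq_edist] at h
  exact_mod_cast h

namespace Walk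

@[simp]
lemma length_boxProdLeft (b : V₂) {a₁ a₂ : V₁} (p : G₁.Walk a₁ a₂) :
    (p.boxProdLeft G₂ b).length = p.length :=
  length_map _ _

@[simp]
lemma length_boxProdRight (a : V₁) {b₁ b₂ : V₂} (q : G₂.Walk b₁ b₂) :
    (q.boxProdRight G₁ a).length = q.length :=
  length_map _ _

end Walk

lemma _root_.IsShortest.boxProdLeft_append_boxProdRight {u₁ v₁ : V₁} {u₂ v₂ : V₂}
    {p : G₁.Walk u₁ v₁} {q : G₂.Walk u₂ v₂} (hp : IsShortest p) (hq : IsShortest q) :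
    IsShortest ((p.boxProdLeft G₂ u₂).append (q.boxProdRight G₁ v₁)) := by
  rw [IsShortest, dist_boxProd_of_reachable ⟨p⟩ ⟨q⟩, Walk.length_append,
    Walk.length_boxProdLeft, Walk.length_boxProdRight, hp, hq]

end SimpleGraph

lemma walkSign_append {V : Type*} {G : SimpleGraph V} (σ : V → V → ℤ) {u v w : V}
    (p : G.Walk u v) (q : G.Walk v w) :
    walkSign σ (p.append q) = walkSign σ p * walkSign σ q := by
  induction p with
  | nil => rw [Walk.nil_append, walkSign, one_mul]
  | cons _ p ih => simp only [Walk.cons_append, walkSign, ih, mul_assoc]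

section WalkSign

variable {V₁ V₂ : Type*} [DecidableEq V₁] [DecidableEq V₂] {G₁ : SimpleGraph V₁}
  {G₂ : SimpleGraph V₂} (σ₁ : V₁ → V₁ → ℤ) (σ₂ : V₂ → V₂ → ℤ)

lemma walkSign_boxProdLeft (b : V₂) {a₁ a₂ : V₁} (p : G₁.Walk a₁ a₂) :
    walkSign (boxSign σ₁ σ₂) (p.boxProdLeft G₂ b) = walkSign σ₁ p := by
  induction p with
  | nil => rfl
  | cons _ p ih =>
    simp only [Walk.boxProdLeft, Walk.map_cons] at ih ⊢
    simp only [walkSign, boxSign, Embedding.coe_toHom, boxProdLeft_apply, if_pos]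
    exact congrArg _ ih

lemma walkSign_boxProdRight (a : V₁) {b₁ b₂ : V₂} (q : G₂.Walk b₁ b₂) :
    walkSign (boxSign σ₁ σ₂) (q.boxProdRight G₁ a) = walkSign σ₂ q := by
  induction q with
  | nil => rfl
  | cons h q ih =>
    simp only [Walk.boxProdRight, Walk.map_cons] at ih ⊢
    simp only [walkSign, boxSign, Embedding.coe_toHom, boxProdRight_apply, if_neg h.ne]
    exact congrArg _ ih

end WalkSign

theorem boxProd_distance_matrix_general {V₁ V₂ : Type*}
    [DecidableEq V₁] [DecidableEq V₂]
    (G₁ : SimpleGraph V₁) (G₂ : SimpleGraph V₂)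
    (h₁ : G₁.Connected) (h₂ : G₂.Connected)
    (σ₁ : V₁ → V₁ → ℤ) (σ₂ : V₂ → V₂ → ℤ)
    -- `Σ₁` and `Σ₂` are compatible, with common shortest-path signs `s₁`, `s₂`:
    (s₁ : V₁ → V₁ → ℤ) (s₂ : V₂ → V₂ → ℤ)
    (hs₁ : ∀ (u v : V₁) (p : G₁.Walk u v), IsShortest p → walkSign σ₁ p = s₁ u v)
    (hs₂ : ∀ (u v : V₂) (p : G₂.Walk u v), IsShortest p → walkSign σ₂ p = s₂ u v)
    -- the product is compatible, with common shortest-path sign `sP`: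
    (sP : V₁ × V₂ → V₁ × V₂ → ℤ)
    (hsP : ∀ (x y : V₁ × V₂) (P : (G₁ □ G₂).Walk x y), IsShortest P →
      walkSign (boxSign σ₁ σ₂) P = sP x y) :
    -- the signed distance matrix of the product:
    (Matrix.of fun x y : V₁ × V₂ => sP x y * ((G₁ □ G₂).dist x y : ℤ)) =
      (Matrix.of fun u v : V₁ => s₁ u v * (G₁.dist u v : ℤ)) ⊗ₖ
          (Matrix.of fun u v : V₂ => s₂ u v) +
        (Matrix.of fun u v : V₁ => s₁ u v) ⊗ₖ
          (Matrix.of fun u v : V₂ => s₂ u v * (G₂.dist u v : ℤ)) := by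
  ext ⟨u₁, u₂⟩ ⟨v₁, v₂⟩
  obtain ⟨p, hp⟩ := h₁.exists_walk_length_eq_dist u₁ v₁
  obtain ⟨q, hq⟩ := h₂.exists_walk_length_eq_dist u₂ v₂
  have hsign : sP (u₁, u₂) (v₁, v₂) = s₁ u₁ v₁ * s₂ u₂ v₂ := by
    rw [← hsP _ _ _ (IsShortest.boxProdLeft_append_boxProdRight hp hq), walkSign_append,
      walkSign_boxProdLeft, walkSign_boxProdRight, hs₁ _ _ p hp, hs₂ _ _ q hq]
  have hdist : (G₁ □ G₂).dist (u₁, u₂) (v₁, v₂) = G₁.dist u₁ v₁ + G₂.dist u₂ v₂ :=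
    dist_boxProd_of_reachable (h₁.preconnected u₁ v₁) (h₂.preconnected u₂ v₂)
  simp only [Matrix.add_apply, Matrix.kroneckerMap_apply, Matrix.of_apply, hsign, hdist]
  push_cast
  ring

/-- Distance matrix of the Cartesian product of compatible signed graphs:
`D(Σ₁×Σ₂) = D(Σ₁) ⊗ (K^{D±}(Σ₂)+Iₙ) + (K^{D±}(Σ₁)+Iₘ) ⊗ D(Σ₂)`. -/
theorem boxProd_distance_matrix {V₁ V₂ : Type*} [Fintype V₁] [Fintype V₂]
    [DecidableEq V₁] [DecidableEq V₂]
    (G₁ : SimpleGraph V₁) (G₂ : SimpleGraph V₂)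
    (h₁ : G₁.Connected) (h₂ : G₂.Connected)
    (σ₁ : V₁ → V₁ → ℤ) (σ₂ : V₂ → V₂ → ℤ)
    (hσ₁ : ∀ u v : V₁, G₁.Adj u v → σ₁ u v = 1 ∨ σ₁ u v = -1)
    (hσ₂ : ∀ u v : V₂, G₂.Adj u v → σ₂ u v = 1 ∨ σ₂ u v = -1)
    (hsymm₁ : ∀ u v : V₁, σ₁ u v = σ₁ v u) (hsymm₂ : ∀ u v : V₂, σ₂ u v = σ₂ v u)
    -- `Σ₁` and `Σ₂` are compatible, with common shortest-path signs `s₁`, `s₂`: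
    (s₁ : V₁ → V₁ → ℤ) (s₂ : V₂ → V₂ → ℤ)
    (hs₁ : ∀ (u v : V₁) (p : G₁.Walk u v), IsShortest p → walkSign σ₁ p = s₁ u v)
    (hs₂ : ∀ (u v : V₂) (p : G₂.Walk u v), IsShortest p → walkSign σ₂ p = s₂ u v)
    -- the product is compatible, with common shortest-path sign `sP`:
    (sP : V₁ × V₂ → V₁ × V₂ → ℤ)
    (hsP : ∀ (x y : V₁ × V₂) (P : (G₁ □ G₂).Walk x y), IsShortest P →
      walkSign (boxSign σ₁ σ₂) P = sP x y) :
    -- the signed distance matrix of the product: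
    (Matrix.of fun x y : V₁ × V₂ => sP x y * ((G₁ □ G₂).dist x y : ℤ)) =
      (Matrix.of fun u v : V₁ => s₁ u v * (G₁.dist u v : ℤ)) ⊗ₖ
          (Matrix.of fun u v : V₂ => s₂ u v) +
        (Matrix.of fun u v : V₁ => s₁ u v) ⊗ₖ
          (Matrix.of fun u v : V₂ => s₂ u v * (G₂.dist u v : ℤ)) :=
  boxProd_distance_matrix_general G₁ G₂ h₁ h₂ σ₁ σ₂ s₁ s₂ hs₁ hs₂ sP hsP
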